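/- Let z_1, …, z_N, and z_∞ = ∞ be marked points on the Riemann sphere and define for λ ∈ ℤ, n ∈ ℤ, 1 ≤ p ≤ N the rational function f^λ_{n,p}(z) = (z - z_p)^{n-λ}·(Π_{i≠p}(z - z_i))^{n-λ+1}·(Π_{i≠p}(z_p - z_i))^{-(n-λ+1)}. Then for all n, m ∈ ℤ and 1 ≤ p, r ≤ N, the total sum of residues at z_1, …, z_N of the product f^λ_{n,p}(z)·f^{1-λ}_{m,r}(z) equals δ_{m,-n}·δ_{p,r}. -/

import Mathlib

open RatFunc

/-- The residue of a rational function `f` at a finite point `p`: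
the coefficient of `(z-p)^{-1}` in the Laurent expansion of `f` at `p`. -/
noncomputable def res (p : ℂ) (f : RatFunc ℂ) : ℂ :=
  (((RatFunc.laurent p f : RatFunc ℂ) : LaurentSeries ℂ)).coeff (-1)

lemma res_add (p : ℂ) (f g : RatFunc ℂ) : res p (f + g) = res p f + res p g := by
  simp [res, map_add, HahnSeries.coeff_add]

lemma coe_C' (c : ℂ) :
    algebraMap (RatFunc ℂ) (LaurentSeries ℂ) (RatFunc.C c) = HahnSeries.C c := by
  rw [← RatFunc.algebraMap_C, show ((algebraMap (Polynomial ℂ) (RatFunc ℂ) (Polynomial.C c) :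
      RatFunc ℂ) : LaurentSeries ℂ) = HahnSeries.ofPowerSeries ℤ ℂ
      ((Polynomial.C c : Polynomial ℂ) : PowerSeries ℂ) from (RatFunc.coe_coe _).symm]
  simp

lemma res_C_mul (p : ℂ) (c : ℂ) (f : RatFunc ℂ) :
    res p (RatFunc.C c * f) = c * res p f := by
  simp only [res, map_mul, RatFunc.laurent_C, map_mul, coe_C']
  rw [HahnSeries.C_mul_eq_smul]
  simp

lemma ofPS_coeff_neg (x : PowerSeries ℂ) (k : ℤ) (hk : k < 0) :
    (HahnSeries.ofPowerSeries ℤ ℂ x).coeff k = 0 := by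
  rw [HahnSeries.ofPowerSeries_apply, HahnSeries.embDomain_notin_image_support]
  rintro ⟨n, -, rfl⟩
  exact absurd (Int.natCast_nonneg n) (by exact not_le.mpr hk)

lemma coe_algebraMap_LS (P : Polynomial ℂ) :
    ((algebraMap (Polynomial ℂ) (RatFunc ℂ) P : RatFunc ℂ) : LaurentSeries ℂ)
      = HahnSeries.ofPowerSeries ℤ ℂ (P : PowerSeries ℂ) :=
  (RatFunc.coe_coe P).symm

lemma res_algebraMap (p : ℂ) (P : Polynomial ℂ) :
    res p (algebraMap (Polynomial ℂ) (RatFunc ℂ) P) = 0 := by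
  rw [res, RatFunc.laurent_algebraMap, coe_algebraMap_LS]
  exact ofPS_coeff_neg _ _ (by norm_num)

lemma coe_inv_PS (P : Polynomial ℂ) (h : P.coeff 0 ≠ 0) :
    (((algebraMap (Polynomial ℂ) (RatFunc ℂ) P)⁻¹ : RatFunc ℂ) : LaurentSeries ℂ)
      = HahnSeries.ofPowerSeries ℤ ℂ ((P : PowerSeries ℂ)⁻¹) := by
  have hP0 : P ≠ 0 := fun h0 => h (by simp [h0])
  have hcc : PowerSeries.constantCoeff (P : PowerSeries ℂ) ≠ 0 := by
    rwa [Polynomial.constantCoeff_coe]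
  have hne : HahnSeries.ofPowerSeries ℤ ℂ (P : PowerSeries ℂ) ≠ 0 := by
    intro h0
    rw [← map_zero (HahnSeries.ofPowerSeries ℤ ℂ)] at h0
    exact hcc (by rw [HahnSeries.ofPowerSeries_injective h0]; simp)
  apply mul_right_cancel₀ hne
  have h1 : ((algebraMap (Polynomial ℂ) (RatFunc ℂ) P)⁻¹ : RatFunc ℂ)
      * algebraMap (Polynomial ℂ) (RatFunc ℂ) P = 1 :=
    inv_mul_cancel₀ (RatFunc.algebraMap_ne_zero hP0)
  have h1' := congrArg (fun f : RatFunc ℂ => (f : LaurentSeries ℂ)) h1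
  simp only [map_mul, map_one] at h1'
  rw [coe_algebraMap_LS] at h1'
  rw [h1', ← map_mul, PowerSeries.inv_mul_cancel _ hcc, map_one]

lemma coeff_neg_inv_pow (P : Polynomial ℂ) (h : P.coeff 0 ≠ 0) (j : ℕ) (k : ℤ) (hk : k < 0) :
    (((algebraMap (Polynomial ℂ) (RatFunc ℂ) P)⁻¹ ^ j : RatFunc ℂ) : LaurentSeries ℂ).coeff k
      = 0 := by
  rw [inv_pow, ← map_pow, coe_inv_PS (P ^ j)
    (by rw [Polynomial.coeff_zero_eq_eval_zero, Polynomial.eval_pow]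
        exact pow_ne_zero _ (by rwa [← Polynomial.coeff_zero_eq_eval_zero]))]
  exact ofPS_coeff_neg _ _ hk

lemma res_inv_pow (q a : ℂ) (j : ℕ) (hj : 1 ≤ j) :
    res q ((RatFunc.X - RatFunc.C a)⁻¹ ^ j) = if q = a ∧ j = 1 then 1 else 0 := by
  have hL : RatFunc.laurent q ((RatFunc.X - RatFunc.C a)⁻¹ ^ j)
      = ((RatFunc.X : RatFunc ℂ) + RatFunc.C (q - a))⁻¹ ^ j := by
    rw [map_pow, map_inv₀, map_sub, RatFunc.laurent_X, RatFunc.laurent_C]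
    congr 2
    rw [map_sub]
    ring
  rw [res, hL]
  by_cases hqa : q = a
  · subst hqa
    simp only [sub_self, map_zero, add_zero, true_and]
    have hcoe : (((RatFunc.X)⁻¹ ^ j : RatFunc ℂ) : LaurentSeries ℂ)
        = HahnSeries.single (-(j : ℤ)) 1 := by
      rw [map_pow, inv_eq_one_div, map_div₀, map_one, RatFunc.coe_X,
        ← inv_eq_one_div, HahnSeries.inv_single (1:ℤ) (1:ℂ), inv_one,
        HahnSeries.single_pow, one_pow]
      congr 1
      simp
    rw [hcoe, HahnSeries.coeff_single]
    rcases eq_or_ne j 1 with rfl | hj1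
    · norm_num
    · rw [if_neg (by omega), if_neg hj1]
  · have hne : q - a ≠ 0 := sub_ne_zero.mpr hqa
    have hrw : (RatFunc.X : RatFunc ℂ) + RatFunc.C (q - a)
        = algebraMap (Polynomial ℂ) (RatFunc ℂ) (Polynomial.X + Polynomial.C (q - a)) := by
      rw [map_add, RatFunc.algebraMap_X, RatFunc.algebraMap_C]
    rw [hrw, if_neg (by tauto)]
    exact coeff_neg_inv_pow _ (by simp [hne]) j _ (by norm_num)

noncomputable def phi0 : Polynomial ℂ →+* LaurentSeries ℂ :=
  Polynomial.eval₂RingHom (HahnSeries.C : ℂ →+* LaurentSeries ℂ) (HahnSeries.single (-1) 1)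

lemma phi0_eq (P : Polynomial ℂ) :
    phi0 P = ∑ i ∈ P.support, HahnSeries.single (-(i : ℤ)) (P.coeff i) := by
  rw [phi0, Polynomial.coe_eval₂RingHom, Polynomial.eval₂_eq_sum, Polynomial.sum_def]
  refine Finset.sum_congr rfl fun i _ => ?_
  rw [HahnSeries.C_apply, HahnSeries.single_pow, HahnSeries.single_mul_single, one_pow,
    zero_add, mul_one]
  congr 1
  simp

lemma phi0_coeff_neg (P : Polynomial ℂ) (n : ℕ) :
    (phi0 P).coeff (-(n : ℤ)) = P.coeff n := by
  rw [phi0_eq]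
  rw [show ((∑ i ∈ P.support, HahnSeries.single (-(i : ℤ)) (P.coeff i)).coeff (-(n : ℤ)))
      = ∑ i ∈ P.support, (HahnSeries.single (-(i : ℤ)) (P.coeff i)).coeff (-(n : ℤ)) from
    map_sum (HahnSeries.coeff.addMonoidHom (-(n : ℤ))) _ _]
  simp only [HahnSeries.coeff_single, neg_inj, Nat.cast_inj]
  rw [Finset.sum_ite_eq P.support n (fun i => P.coeff i)]
  by_cases h : n ∈ P.support
  · rw [if_pos h]
  · rw [if_neg h]
    exact (Polynomial.notMem_support_iff.mp h).symm

lemma phi0_coeff_pos (P : Polynomial ℂ) (k : ℤ) (hk : 0 < k) : (phi0 P).coeff k = 0 := by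
  rw [phi0_eq]
  rw [show ((∑ i ∈ P.support, HahnSeries.single (-(i : ℤ)) (P.coeff i)).coeff k)
      = ∑ i ∈ P.support, (HahnSeries.single (-(i : ℤ)) (P.coeff i)).coeff k from
    map_sum (HahnSeries.coeff.addMonoidHom k) _ _]
  refine Finset.sum_eq_zero fun i _ => ?_
  rw [HahnSeries.coeff_single, if_neg (by omega)]

lemma phi0_injective : Function.Injective phi0 := by
  rw [injective_iff_map_eq_zero]
  intro P hP
  ext n
  rw [← phi0_coeff_neg P n, hP]
  simp

noncomputable def Phi : RatFunc ℂ →+* LaurentSeries ℂ := IsFractionRing.lift phi0_injective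

noncomputable def S (f : RatFunc ℂ) : ℂ := (Phi f).coeff 1

lemma Phi_algebraMap (P : Polynomial ℂ) :
    Phi (algebraMap (Polynomial ℂ) (RatFunc ℂ) P) = phi0 P :=
  IsFractionRing.lift_algebraMap _ _

lemma S_algebraMap (P : Polynomial ℂ) : S (algebraMap (Polynomial ℂ) (RatFunc ℂ) P) = 0 := by
  rw [S, Phi_algebraMap]
  exact phi0_coeff_pos P 1 one_pos

lemma S_add (f g : RatFunc ℂ) : S (f + g) = S f + S g := by
  simp [S, map_add, HahnSeries.coeff_add]

lemma ofPS_inv (u : PowerSeries ℂ) (h : PowerSeries.constantCoeff u ≠ 0) :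
    (HahnSeries.ofPowerSeries ℤ ℂ u)⁻¹ = HahnSeries.ofPowerSeries ℤ ℂ u⁻¹ := by
  apply inv_eq_of_mul_eq_one_right
  rw [← map_mul, PowerSeries.mul_inv_cancel _ h, map_one]

lemma ofPS_one_sub (a : ℂ) :
    HahnSeries.ofPowerSeries ℤ ℂ (1 - PowerSeries.C a * PowerSeries.X)
      = 1 - HahnSeries.single 1 a := by
  rw [map_sub, map_one, map_mul, HahnSeries.ofPowerSeries_C, HahnSeries.ofPowerSeries_X,
    HahnSeries.C_apply, HahnSeries.single_mul_single, zero_add, mul_one]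

lemma Phi_X_sub_C (a : ℂ) :
    Phi (RatFunc.X - RatFunc.C a)
      = HahnSeries.single (-1) 1 * HahnSeries.ofPowerSeries ℤ ℂ
          (1 - PowerSeries.C a * PowerSeries.X) := by
  have h1 : RatFunc.X - RatFunc.C a
      = algebraMap (Polynomial ℂ) (RatFunc ℂ) (Polynomial.X - Polynomial.C a) := by
    rw [map_sub, RatFunc.algebraMap_X, RatFunc.algebraMap_C]
  rw [h1, Phi_algebraMap, phi0, Polynomial.coe_eval₂RingHom, Polynomial.eval₂_sub,
    Polynomial.eval₂_X, Polynomial.eval₂_C, ofPS_one_sub, mul_sub, mul_one,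
    HahnSeries.single_mul_single, one_mul, neg_add_cancel, HahnSeries.C_apply]

lemma constCoeff_one_sub (a : ℂ) :
    PowerSeries.constantCoeff (1 - PowerSeries.C a * PowerSeries.X) = 1 := by
  simp

lemma Phi_inv_pow (a : ℂ) (d : ℕ) :
    Phi ((RatFunc.X - RatFunc.C a)⁻¹ ^ d)
      = HahnSeries.single (d : ℤ) 1 *
        HahnSeries.ofPowerSeries ℤ ℂ (((1 - PowerSeries.C a * PowerSeries.X) ^ d)⁻¹) := by
  have hs : ((HahnSeries.single (-1 : ℤ) 1 : LaurentSeries ℂ))⁻¹ = HahnSeries.single 1 1 := by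
    rw [HahnSeries.inv_single (-1:ℤ) (1:ℂ), inv_one, neg_neg]
  have hcc : PowerSeries.constantCoeff ((1 - PowerSeries.C a * PowerSeries.X) ^ d) ≠ 0 := by
    rw [map_pow, constCoeff_one_sub, one_pow]; exact one_ne_zero
  rw [map_pow, map_inv₀, Phi_X_sub_C, mul_inv, mul_pow, hs, HahnSeries.single_pow, one_pow,
    inv_pow, ← map_pow, ofPS_inv _ hcc]
  congr 1
  simp

lemma S_inv_pow (a : ℂ) (j : ℕ) (hj : 1 ≤ j) :
    S ((RatFunc.X - RatFunc.C a)⁻¹ ^ j) = if j = 1 then 1 else 0 := by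
  rw [S, Phi_inv_pow, show (1 : ℤ) = (1 - (j : ℤ)) + (j : ℤ) by ring,
    HahnSeries.coeff_single_mul_add, one_mul]
  rcases eq_or_ne j 1 with rfl | hj1
  · rw [if_pos rfl]
    norm_num
    rw [show ((0:ℤ)) = ((0:ℕ):ℤ) by norm_num, HahnSeries.ofPowerSeries_apply_coeff,
      PowerSeries.coeff_zero_eq_constantCoeff, PowerSeries.constantCoeff_inv,
      constCoeff_one_sub, inv_one]
  · rw [if_neg hj1, ofPS_coeff_neg _ _ (by omega)]

lemma Phi_C (c : ℂ) : Phi (RatFunc.C c) = HahnSeries.C c := by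
  rw [← RatFunc.algebraMap_C c, Phi_algebraMap, phi0, Polynomial.coe_eval₂RingHom,
    Polynomial.eval₂_C]

lemma single_nat_prod {N : ℕ} (d : Fin N → ℕ) :
    (∏ i, (HahnSeries.single (d i : ℤ) 1 : LaurentSeries ℂ))
      = HahnSeries.single ((∑ i, d i : ℕ) : ℤ) 1 := by
  have h : ∀ (k : ℕ), (HahnSeries.single ((k : ℕ) : ℤ) (1:ℂ) : LaurentSeries ℂ)
      = (HahnSeries.single (1:ℤ) 1) ^ k := by
    intro k; rw [HahnSeries.single_pow, one_pow]; congr 1; simp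
  simp_rw [h]
  rw [Finset.prod_pow_eq_pow_sum]

lemma S_neg_prod {N : ℕ} (z : Fin N → ℂ) (d : Fin N → ℕ) (hd : 2 ≤ ∑ i, d i) (c : ℂ) :
    S (RatFunc.C c * ∏ i, (RatFunc.X - RatFunc.C (z i))⁻¹ ^ d i) = 0 := by
  rw [S, map_mul, Phi_C, map_prod]
  simp_rw [Phi_inv_pow]
  rw [Finset.prod_mul_distrib, ← map_prod, single_nat_prod]
  rw [show (HahnSeries.C c * (HahnSeries.single ((∑ i, d i : ℕ) : ℤ) 1 *
      (HahnSeries.ofPowerSeries ℤ ℂ) (∏ i, ((1 - PowerSeries.C (z i) * PowerSeries.X) ^ d i)⁻¹)))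
    = HahnSeries.single ((∑ i, d i : ℕ) : ℤ) c *
      (HahnSeries.ofPowerSeries ℤ ℂ) (∏ i, ((1 - PowerSeries.C (z i) * PowerSeries.X) ^ d i)⁻¹)
    from by rw [← mul_assoc, HahnSeries.C_apply, HahnSeries.single_mul_single, zero_add, mul_one]]
  have hlt : (1 : ℤ) - ((∑ i, d i : ℕ) : ℤ) < 0 := by
    have : (2:ℤ) ≤ ((∑ i, d i : ℕ) : ℤ) := by exact_mod_cast hd
    omega
  rw [show (1 : ℤ) = (1 - ((∑ i, d i : ℕ) : ℤ)) + ((∑ i, d i : ℕ) : ℤ) by ring,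
    HahnSeries.coeff_single_mul_add, ofPS_coeff_neg _ _ hlt, mul_zero]

noncomputable def Tsum {N : ℕ} (z : Fin N → ℂ) (f : RatFunc ℂ) : ℂ := ∑ q, res (z q) f

lemma Tsum_add {N : ℕ} (z : Fin N → ℂ) (f g : RatFunc ℂ) :
    Tsum z (f + g) = Tsum z f + Tsum z g := by
  simp [Tsum, res_add, Finset.sum_add_distrib]

lemma Tsum_C_mul {N : ℕ} (z : Fin N → ℂ) (c : ℂ) (f : RatFunc ℂ) :
    Tsum z (RatFunc.C c * f) = c * Tsum z f := by
  simp [Tsum, res_C_mul, Finset.mul_sum]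

lemma Tsum_algebraMap {N : ℕ} (z : Fin N → ℂ) (P : Polynomial ℂ) :
    Tsum z (algebraMap (Polynomial ℂ) (RatFunc ℂ) P) = 0 := by
  simp [Tsum, res_algebraMap]

lemma S_C_mul (c : ℂ) (f : RatFunc ℂ) : S (RatFunc.C c * f) = c * S f := by
  rw [S, S, map_mul, Phi_C, HahnSeries.C_mul_eq_smul]
  simp

lemma Tsum_inv_pow {N : ℕ} (z : Fin N → ℂ) (hz : Function.Injective z) (q : Fin N)
    (j : ℕ) (hj : 1 ≤ j) :
    Tsum z ((RatFunc.X - RatFunc.C (z q))⁻¹ ^ j) = if j = 1 then 1 else 0 := by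
  rw [Tsum]
  have h : ∀ q' : Fin N, res (z q') ((RatFunc.X - RatFunc.C (z q))⁻¹ ^ j)
      = if q' = q then (if j = 1 then (1:ℂ) else 0) else 0 := by
    intro q'
    rw [res_inv_pow _ _ _ hj]
    by_cases hq : q' = q
    · simp [hq]
    · rw [if_neg hq, if_neg (by exact fun hc => hq (hz hc.1))]
  simp_rw [h]
  rw [Finset.sum_ite_eq' Finset.univ q, if_pos (Finset.mem_univ q)]

lemma X_sub_C_ne_zero' (a : ℂ) : (RatFunc.X - RatFunc.C a) ≠ 0 := by
  rw [show RatFunc.X - RatFunc.C a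
      = algebraMap (Polynomial ℂ) (RatFunc ℂ) (Polynomial.X - Polynomial.C a) by
    rw [map_sub, RatFunc.algebraMap_X, RatFunc.algebraMap_C]]
  exact RatFunc.algebraMap_ne_zero (Polynomial.X_sub_C_ne_zero a)

lemma T_eq_S {N : ℕ} (z : Fin N → ℂ) (hz : Function.Injective z) (M : ℕ) :
    ∀ (d : Fin N → ℕ), (∑ i, d i = M) → ∀ P : Polynomial ℂ,
      Tsum z (algebraMap (Polynomial ℂ) (RatFunc ℂ) P
          * ∏ i, (RatFunc.X - RatFunc.C (z i))⁻¹ ^ d i)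
        = S (algebraMap (Polynomial ℂ) (RatFunc ℂ) P
          * ∏ i, (RatFunc.X - RatFunc.C (z i))⁻¹ ^ d i) := by
  induction M with
  | zero =>
    intro d hd P
    have hd0 : ∀ i, d i = 0 := by
      intro i
      have := Finset.sum_eq_zero_iff.mp hd
      exact this i (Finset.mem_univ i)
    simp only [hd0, pow_zero, Finset.prod_const_one, mul_one]
    rw [Tsum_algebraMap, S_algebraMap]
  | succ M ih =>
    intro d hd P
    have hq : ∃ q, d q ≠ 0 := by
      by_contra hc
      push_neg at hc
      rw [Finset.sum_eq_zero (fun i _ => hc i)] at hd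
      omega
    obtain ⟨q, hdq⟩ := hq
    set w : Fin N → RatFunc ℂ := fun i => RatFunc.X - RatFunc.C (z i) with hw_def
    have hw : ∀ i, w i ≠ 0 := fun i => X_sub_C_ne_zero' (z i)
    set D : Polynomial ℂ :=
      ∏ i ∈ Finset.univ.erase q, (Polynomial.X - Polynomial.C (z i)) ^ d i with hD_def
    have hDval : D.eval (z q) ≠ 0 := by
      rw [hD_def, Polynomial.eval_prod]
      refine Finset.prod_ne_zero_iff.mpr fun i hi => ?_
      rw [Polynomial.eval_pow, Polynomial.eval_sub, Polynomial.eval_X, Polynomial.eval_C]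
      exact pow_ne_zero _ (sub_ne_zero.mpr fun hc =>
        (Finset.ne_of_mem_erase hi) (hz hc.symm))
    set a : ℂ := P.eval (z q) / D.eval (z q) with ha_def
    have hroot : (P - Polynomial.C a * D).eval (z q) = 0 := by
      rw [Polynomial.eval_sub, Polynomial.eval_mul, Polynomial.eval_C, ha_def]
      field_simp
      ring
    obtain ⟨Q, hQ⟩ := Polynomial.dvd_iff_isRoot.mpr hroot
    have hPdec : P = Polynomial.C a * D + (Polynomial.X - Polynomial.C (z q)) * Q := by
      rw [← hQ]; ring
    have hmapD : algebraMap (Polynomial ℂ) (RatFunc ℂ) D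
        = ∏ i ∈ Finset.univ.erase q, (w i) ^ d i := by
      rw [hD_def, map_prod]
      refine Finset.prod_congr rfl fun i _ => ?_
      rw [map_pow, map_sub, RatFunc.algebraMap_X, RatFunc.algebraMap_C]
    have hprod : (∏ i, (w i)⁻¹ ^ d i)
        = (w q)⁻¹ ^ d q * ∏ i ∈ Finset.univ.erase q, (w i)⁻¹ ^ d i :=
      (Finset.mul_prod_erase Finset.univ _ (Finset.mem_univ q)).symm
    have hD1 : algebraMap (Polynomial ℂ) (RatFunc ℂ) D * ∏ i, (w i)⁻¹ ^ d i
        = (w q)⁻¹ ^ d q := by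
      rw [hmapD, hprod, mul_comm ((w q)⁻¹ ^ d q), ← mul_assoc, ← Finset.prod_mul_distrib]
      rw [Finset.prod_eq_one (fun i _ => by
        rw [inv_pow, mul_inv_cancel₀ (pow_ne_zero _ (hw i))] :
          ∀ i ∈ Finset.univ.erase q, (w i) ^ d i * (w i)⁻¹ ^ d i = 1), one_mul]
    have hpow : (w q)⁻¹ ^ d q = (w q)⁻¹ ^ (d q - 1) * (w q)⁻¹ := by
      rw [← pow_succ]
      congr 1
      omega
    have hwq2 : w q * (w q)⁻¹ ^ d q = (w q)⁻¹ ^ (d q - 1) := by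
      rw [hpow, mul_comm ((w q)⁻¹ ^ (d q - 1)), ← mul_assoc,
        mul_inv_cancel₀ (hw q), one_mul]
    have hwq : w q * ∏ i, (w i)⁻¹ ^ d i
        = ∏ i, (w i)⁻¹ ^ (Function.update d q (d q - 1)) i := by
      rw [hprod, ← mul_assoc, hwq2]
      rw [← Finset.mul_prod_erase Finset.univ
        (fun i => (w i)⁻¹ ^ (Function.update d q (d q - 1)) i) (Finset.mem_univ q)]
      rw [Function.update_self]
      congr 1
      refine Finset.prod_congr rfl fun i hi => ?_
      rw [Function.update_of_ne (Finset.ne_of_mem_erase hi)]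
    have hupdsum : ∑ i, Function.update d q (d q - 1) i = M := by
      have e1 : ∑ i, Function.update d q (d q - 1) i
          = (d q - 1) + ∑ i ∈ Finset.univ.erase q, d i := by
        rw [Finset.erase_eq]
        exact Finset.sum_update_of_mem (f := d) (Finset.mem_univ q) _
      have e2 : d q + ∑ i ∈ Finset.univ.erase q, d i = ∑ i, d i :=
        Finset.add_sum_erase Finset.univ d (Finset.mem_univ q)
      omega
    have hsplit : algebraMap (Polynomial ℂ) (RatFunc ℂ) P * ∏ i, (w i)⁻¹ ^ d i
        = RatFunc.C a * (w q)⁻¹ ^ d q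
          + algebraMap (Polynomial ℂ) (RatFunc ℂ) Q
            * ∏ i, (w i)⁻¹ ^ (Function.update d q (d q - 1)) i := by
      conv_lhs => rw [hPdec]
      rw [map_add, add_mul, map_mul, map_mul, RatFunc.algebraMap_C]
      congr 1
      · rw [mul_assoc, hD1]
      · rw [show algebraMap (Polynomial ℂ) (RatFunc ℂ) (Polynomial.X - Polynomial.C (z q))
            = w q by rw [map_sub, RatFunc.algebraMap_X, RatFunc.algebraMap_C],
          mul_comm (w q), mul_assoc, hwq]
    rw [hsplit, Tsum_add, S_add, Tsum_C_mul, S_C_mul, ih _ hupdsum Q,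
      Tsum_inv_pow z hz q (d q) (by omega)]
    simp only [hw_def]
    rw [S_inv_pow (z q) (d q) (by omega)]

/-- The genus-zero Krichever–Novikov basis element of weight `lam`:
`f^λ_{n,p}(z) = (z-z_p)^{n-λ}·(Π_{i≠p}(z-z_i))^{n-λ+1}·(Π_{i≠p}(z_p-z_i))^{-(n-λ+1)}`. -/
noncomputable def knBasis {N : ℕ} (z : Fin N → ℂ) (lam n : ℤ) (p : Fin N) :
    RatFunc ℂ :=
  (RatFunc.X - RatFunc.C (z p)) ^ (n - lam) *
    (∏ i ∈ Finset.univ.erase p, (RatFunc.X - RatFunc.C (z i))) ^ (n - lam + 1) *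
    RatFunc.C ((∏ i ∈ Finset.univ.erase p, (z p - z i)) ^ (-(n - lam + 1)))

lemma prod_ite_zpow {N : ℕ} (z : Fin N → ℂ) (p : Fin N) (u : ℤ) :
    (∏ i, (RatFunc.X - RatFunc.C (z i)) ^ (if i = p then u else u + 1))
      = (RatFunc.X - RatFunc.C (z p)) ^ u
        * (∏ i ∈ Finset.univ.erase p, (RatFunc.X - RatFunc.C (z i))) ^ (u + 1) := by
  rw [← Finset.mul_prod_erase Finset.univ _ (Finset.mem_univ p), if_pos rfl,
    ← Finset.prod_zpow]
  congr 1
  exact Finset.prod_congr rfl fun i hi => by rw [if_neg (Finset.ne_of_mem_erase hi)]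

lemma knBasis_eq {N : ℕ} (z : Fin N → ℂ) (lam n : ℤ) (p : Fin N) :
    knBasis z lam n p
      = RatFunc.C ((∏ i ∈ Finset.univ.erase p, (z p - z i)) ^ (-(n - lam + 1)))
        * ∏ i, (RatFunc.X - RatFunc.C (z i)) ^ (if i = p then n - lam else n - lam + 1) := by
  rw [knBasis, prod_ite_zpow]
  ring

lemma combine {N : ℕ} (z : Fin N → ℂ) (c1 c2 : ℂ) (E1 E2 : Fin N → ℤ) :
    (RatFunc.C c1 * ∏ i, (RatFunc.X - RatFunc.C (z i)) ^ E1 i)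
      * (RatFunc.C c2 * ∏ i, (RatFunc.X - RatFunc.C (z i)) ^ E2 i)
      = RatFunc.C (c1 * c2) * ∏ i, (RatFunc.X - RatFunc.C (z i)) ^ (E1 i + E2 i) := by
  rw [map_mul,
    show (∏ i, (RatFunc.X - RatFunc.C (z i)) ^ (E1 i + E2 i))
      = (∏ i, (RatFunc.X - RatFunc.C (z i)) ^ E1 i)
        * ∏ i, (RatFunc.X - RatFunc.C (z i)) ^ E2 i from by
      rw [← Finset.prod_mul_distrib]
      exact Finset.prod_congr rfl fun i _ => zpow_add₀ (X_sub_C_ne_zero' (z i)) _ _]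
  ring

lemma Tsum_poly_case {N : ℕ} (z : Fin N → ℂ) (c : ℂ) (E : Fin N → ℤ) (hE : ∀ i, 0 ≤ E i) :
    Tsum z (RatFunc.C c * ∏ i, (RatFunc.X - RatFunc.C (z i)) ^ E i) = 0 := by
  have h : (∏ i, (RatFunc.X - RatFunc.C (z i)) ^ E i)
      = algebraMap (Polynomial ℂ) (RatFunc ℂ)
          (∏ i, (Polynomial.X - Polynomial.C (z i)) ^ (E i).toNat) := by
    rw [map_prod]
    refine Finset.prod_congr rfl fun i _ => ?_
    rw [map_pow, map_sub, RatFunc.algebraMap_X, RatFunc.algebraMap_C,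
      ← zpow_natCast, Int.toNat_of_nonneg (hE i)]
  rw [h, Tsum_C_mul, Tsum_algebraMap, mul_zero]

lemma Tsum_hard_case {N : ℕ} (z : Fin N → ℂ) (hz : Function.Injective z) (c : ℂ)
    (E : Fin N → ℤ) (hE : ∀ i, E i ≤ 0) (hsum : ∑ i, E i ≤ -2) :
    Tsum z (RatFunc.C c * ∏ i, (RatFunc.X - RatFunc.C (z i)) ^ E i) = 0 := by
  set d : Fin N → ℕ := fun i => (-E i).toNat with hd_def
  have hdE : ∀ i, (d i : ℤ) = -E i := fun i => Int.toNat_of_nonneg (by have := hE i; omega)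
  have hprod : (∏ i, (RatFunc.X - RatFunc.C (z i)) ^ E i)
      = ∏ i, (RatFunc.X - RatFunc.C (z i))⁻¹ ^ d i := by
    refine Finset.prod_congr rfl fun i _ => ?_
    rw [inv_pow, ← zpow_natCast, ← zpow_neg, hdE i, neg_neg]
  have hdsum : 2 ≤ ∑ i, d i := by
    have h1 : ((∑ i, d i : ℕ) : ℤ) = -∑ i, E i := by
      push_cast
      rw [← Finset.sum_neg_distrib]
      exact Finset.sum_congr rfl fun i _ => hdE i
    omega
  have hC : RatFunc.C c = algebraMap (Polynomial ℂ) (RatFunc ℂ) (Polynomial.C c) :=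
    (RatFunc.algebraMap_C c).symm
  rw [hprod, hC, T_eq_S z hz (∑ i, d i) d rfl (Polynomial.C c), ← hC,
    S_neg_prod z d hdsum c]

/-- Krichever–Novikov duality in genus zero:
`⟨f^λ_{n,p}, f^{1-λ}_{m,r}⟩ = δ_{m,-n}·δ_{p,r}`, where the pairing is the sum
of the residues at `z_1,…,z_N` of the product. -/
theorem stmt12 {N : ℕ} (hN : 0 < N) (z : Fin N → ℂ) (hz : Function.Injective z)
    (lam n m : ℤ) (p r : Fin N) :
    ∑ q : Fin N, res (z q) (knBasis z lam n p * knBasis z (1 - lam) m r)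
      = if m = -n ∧ p = r then 1 else 0 := by
  show Tsum z (knBasis z lam n p * knBasis z (1 - lam) m r) = _
  rw [knBasis_eq z lam n p, knBasis_eq z (1 - lam) m r, combine]
  set c : ℂ := (∏ i ∈ Finset.univ.erase p, (z p - z i)) ^ (-(n - lam + 1))
    * (∏ i ∈ Finset.univ.erase r, (z r - z i)) ^ (-(m - (1 - lam) + 1)) with hc_def
  set E : Fin N → ℤ := fun i => (if i = p then n - lam else n - lam + 1)
    + (if i = r then m - (1 - lam) else m - (1 - lam) + 1) with hE_def
  have hEfold : ∀ i, ((if i = p then n - lam else n - lam + 1)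
      + (if i = r then m - (1 - lam) else m - (1 - lam) + 1)) = E i := fun i => by
    rw [hE_def]
  simp only [hEfold]
  clear_value c E
  by_cases hpr : p = r
  · subst hpr
    have hEp : E p = n + m - 1 := by simp [hE_def]; ring
    have hEo : ∀ i, i ≠ p → E i = n + m + 1 := by
      intro i hip
      simp [hE_def, hip]
      ring
    by_cases hmn : m = -n
    · -- delta case
      subst hmn
      rw [if_pos ⟨rfl, rfl⟩]
      have hA : (∏ i ∈ Finset.univ.erase p, (z p - z i)) ≠ 0 :=
        Finset.prod_ne_zero_iff.mpr fun i hi =>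
          sub_ne_zero.mpr fun hcon => (Finset.ne_of_mem_erase hi) (hz hcon).symm
      have hcA : c = (∏ i ∈ Finset.univ.erase p, (z p - z i))⁻¹ := by
        rw [hc_def, ← zpow_add₀ hA,
          show (-(n - lam + 1)) + (-(-n - (1 - lam) + 1)) = -1 by ring, zpow_neg_one]
      set P₀ : Polynomial ℂ := ∏ i ∈ Finset.univ.erase p, (Polynomial.X - Polynomial.C (z i))
        with hP0_def
      have hPA : P₀.eval (z p) = ∏ i ∈ Finset.univ.erase p, (z p - z i) := by
        rw [hP0_def, Polynomial.eval_prod]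
        exact Finset.prod_congr rfl fun i _ => by
          rw [Polynomial.eval_sub, Polynomial.eval_X, Polynomial.eval_C]
      obtain ⟨Q, hQ⟩ := Polynomial.X_sub_C_dvd_sub_C_eval (a := z p) (p := P₀)
      rw [hPA] at hQ
      have hP₀ : P₀ = (Polynomial.X - Polynomial.C (z p)) * Q
          + Polynomial.C (∏ i ∈ Finset.univ.erase p, (z p - z i)) := by
        rw [← hQ]; ring
      have hEp' : E p = -1 := by rw [hEp]; ring
      have hprod : (∏ i, (RatFunc.X - RatFunc.C (z i)) ^ E i)
          = (RatFunc.X - RatFunc.C (z p))⁻¹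
            * algebraMap (Polynomial ℂ) (RatFunc ℂ) P₀ := by
        rw [← Finset.mul_prod_erase Finset.univ _ (Finset.mem_univ p), hEp', zpow_neg_one]
        congr 1
        rw [hP0_def, map_prod]
        refine Finset.prod_congr rfl fun i hi => ?_
        rw [hEo i (Finset.ne_of_mem_erase hi), show n + -n + 1 = (1:ℤ) by ring, zpow_one,
          map_sub, RatFunc.algebraMap_X, RatFunc.algebraMap_C]
      have hwp := X_sub_C_ne_zero' (z p)
      have hg : RatFunc.C c * ∏ i, (RatFunc.X - RatFunc.C (z i)) ^ E i
          = RatFunc.C c * algebraMap (Polynomial ℂ) (RatFunc ℂ) Q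
            + RatFunc.C (c * (∏ i ∈ Finset.univ.erase p, (z p - z i)))
              * (RatFunc.X - RatFunc.C (z p))⁻¹ ^ 1 := by
        rw [hprod]
        conv_lhs => rw [hP₀]
        rw [map_add, map_mul, map_sub, RatFunc.algebraMap_X, RatFunc.algebraMap_C,
          RatFunc.algebraMap_C, map_mul, pow_one]
        field_simp
      rw [hg, Tsum_add, Tsum_C_mul, Tsum_algebraMap, Tsum_C_mul, Tsum_inv_pow z hz p 1 le_rfl,
        if_pos rfl, mul_one, mul_zero, hcA, inv_mul_cancel₀ hA, zero_add]
    · rw [if_neg (by tauto)]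
      rcases (by omega : n + m ≤ -1 ∨ 1 ≤ n + m) with hK | hK
      · refine Tsum_hard_case z hz c E (fun i => ?_) ?_
        · by_cases hip : i = p
          · rw [hip, hEp]; omega
          · rw [hEo i hip]; omega
        · have h1 : ∑ i, E i = E p + ∑ i ∈ Finset.univ.erase p, E i :=
            (Finset.add_sum_erase _ E (Finset.mem_univ p)).symm
          have h2 : ∑ i ∈ Finset.univ.erase p, E i ≤ 0 :=
            Finset.sum_nonpos fun i hi => by
              rw [hEo i (Finset.ne_of_mem_erase hi)]; omega
          rw [h1, hEp]
          omega
      · refine Tsum_poly_case z c E fun i => ?_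
        by_cases hip : i = p
        · rw [hip, hEp]; omega
        · rw [hEo i hip]; omega
  · rw [if_neg (by tauto)]
    have hEp : E p = n + m := by simp [hE_def, hpr]; ring
    have hEr : E r = n + m := by simp [hE_def, Ne.symm hpr]; ring
    have hEo : ∀ i, i ≠ p → i ≠ r → E i = n + m + 1 := by
      intro i hip hir
      simp [hE_def, hip, hir]
      ring
    rcases (by omega : n + m ≤ -1 ∨ 0 ≤ n + m) with hK | hK
    · refine Tsum_hard_case z hz c E (fun i => ?_) ?_
      · by_cases hip : i = p
        · rw [hip, hEp]; omega
        · by_cases hir : i = r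
          · rw [hir, hEr]; omega
          · rw [hEo i hip hir]; omega
      · have hrp : r ∈ Finset.univ.erase p :=
          Finset.mem_erase.mpr ⟨Ne.symm hpr, Finset.mem_univ r⟩
        have h1 : ∑ i, E i = E p + ∑ i ∈ Finset.univ.erase p, E i :=
          (Finset.add_sum_erase _ E (Finset.mem_univ p)).symm
        have h2 : ∑ i ∈ Finset.univ.erase p, E i
            = E r + ∑ i ∈ (Finset.univ.erase p).erase r, E i :=
          (Finset.add_sum_erase _ E hrp).symm
        have h3 : ∑ i ∈ (Finset.univ.erase p).erase r, E i ≤ 0 :=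
          Finset.sum_nonpos fun i hi => by
            have hir : i ≠ r := (Finset.mem_erase.mp hi).1
            have hip : i ≠ p := (Finset.mem_erase.mp (Finset.mem_erase.mp hi).2).1
            rw [hEo i hip hir]; omega
        rw [h1, h2, hEp, hEr]
        omega
    · refine Tsum_poly_case z c E fun i => ?_
      by_cases hip : i = p
      · rw [hip, hEp]; omega
      · by_cases hir : i = r
        · rw [hir, hEr]; omega
        · rw [hEo i hip hir]; omega
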